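/- Let (X, ⊥, F) be an O-space. Then for any x ∈ X and A ∈ F with x ∈ A, one has {x} ⊗ A = cl({x}). -/
import Mathlib


variable {X : Type*}

/-- Orthogonal complement: `A^⊥ = {b : b ⊥ a for all a ∈ A}`. -/
def oc (R : X → X → Prop) (A : Set X) : Set X := {b | ∀ a ∈ A, R b a}

/-- Closure: `cl(A) = (A^⊥)^⊥`. -/
def ocl (R : X → X → Prop) (A : Set X) : Set X := oc R (oc R A)

/-- The zero set `Z = {y : y ⊥ x for all x}`. -/
def zset (R : X → X → Prop) : Set X := {y | ∀ x, R y x}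

/-- Sasaki projection `A ⊗ B = cl(B) ∩ (cl(B) ∩ A^⊥)^⊥`. -/
def sproj (R : X → X → Prop) (A B : Set X) : Set X :=
  ocl R B ∩ oc R (ocl R B ∩ oc R A)

/-- Dual of the Sasaki projection: `A ⊕ B = (B^⊥ ⊗ A^⊥)^⊥`. -/
def sdual (R : X → X → Prop) (A B : Set X) : Set X :=
  oc R (sproj R (oc R B) (oc R A))

/-- Set orthogonality: `A ⊥ B` iff `a ⊥ b` for all `a ∈ A`, `b ∈ B`. -/
def orth (R : X → X → Prop) (A B : Set X) : Prop := ∀ a ∈ A, ∀ b ∈ B, R a b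

/-- An O-space: a symmetric relation satisfying Z, together with a family `F`
of subsets satisfying properties F, O and A. -/
structure IsOSpace (R : X → X → Prop) (F : Set (Set X)) : Prop where
  symm : ∀ x y : X, R x y → R y x
  zero : ∀ x : X, R x x → x ∈ zset R
  flats : ∀ A ∈ F, A = ocl R A
  singcl_mem : ∀ x : X, ocl R {x} ∈ F
  z_mem : zset R ∈ F
  oc_mem : ∀ A ∈ F, oc R A ∈ F
  sproj_mem : ∀ A ∈ F, ∀ B ∈ F, sproj R A B ∈ F
  o1 : ∀ x : X, ∀ A ∈ F, x ∈ ocl R (sproj R {x} A ∪ sproj R {x} (oc R A))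
  o2 : ∀ x : X, ∀ A ∈ F, sproj R {x} A ⊆ ocl R ({x} ∪ sproj R {x} (oc R A))
  a : ∀ A ∈ F, ∀ B ∈ F, sproj R A B ⊆ ⋃ a ∈ A, sproj R {a} B

lemma oc_anti' (R : X → X → Prop) {A B : Set X} (hAB : A ⊆ B) : oc R B ⊆ oc R A :=
  fun y hy a ha => hy a (hAB ha)

lemma sub_ocl' (R : X → X → Prop) (hs : ∀ x y, R x y → R y x) (A : Set X) : A ⊆ ocl R A :=
  fun y hy b hb => hs _ _ (hb y hy)

lemma oc_ocl' (R : X → X → Prop) (hs : ∀ x y, R x y → R y x) (A : Set X) :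
    oc R (ocl R A) = oc R A :=
  Set.Subset.antisymm (oc_anti' R (sub_ocl' R hs A)) (sub_ocl' R hs (oc R A))

theorem stmt6 (R : X → X → Prop) (F : Set (Set X)) (h : IsOSpace R F)
    (x : X) (A : Set X) (hA : A ∈ F) (hx : x ∈ A) :
    sproj R {x} A = ocl R {x} := by
  apply Set.Subset.antisymm
  · intro y hy
    have hsub : ({x} : Set X) ∪ sproj R {x} (oc R A) ⊆ ocl R {x} := by
      rintro z (hz | ⟨hz1, hz2⟩)
      · exact sub_ocl' R h.symm _ hz
      · have hzA : z ∈ oc R A := by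
          have heq : ocl R (oc R A) = oc R A := by
            show oc R (ocl R A) = oc R A
            rw [← h.flats A hA]
          rwa [heq] at hz1
        have hzx : z ∈ oc R ({x} : Set X) := by
          rintro a rfl; exact hzA _ hx
        have hRzz : R z z := hz2 z ⟨hz1, hzx⟩
        exact fun b _ => h.zero z hRzz b
    have h2 := h.o2 x A hA hy
    have h3 : ocl R (({x} : Set X) ∪ sproj R {x} (oc R A)) ⊆ ocl R (ocl R ({x} : Set X)) :=
      oc_anti' R (oc_anti' R hsub)
    have h4 : ocl R (ocl R ({x} : Set X)) = ocl R ({x} : Set X) := by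
      show oc R (oc R (ocl R {x})) = ocl R {x}
      rw [oc_ocl' R h.symm]; rfl
    exact h4 ▸ h3 h2
  · intro y hy
    refine ⟨?_, ?_⟩
    · have : ocl R ({x} : Set X) ⊆ ocl R A :=
        oc_anti' R (oc_anti' R (by rintro a rfl; exact hx))
      exact this hy
    · exact fun a ha => hy a ha.2
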